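/- arXiv:2103.03514 — 2 statements merged into one kernel-verified Lean document; each statement's English description precedes it below -/
import Mathlib

section
/- Let X, Y be n×p real matrices, c ≥ 0 and η > 0, and suppose ‖Φ((Y-X)ᵀX)‖_F ≤ c·η·‖XᵀX - I_p‖_F, where Φ(M) = (M+Mᵀ)/2. Then ‖YᵀY - I_p‖_F ≤ (1 + 2cη)·‖XᵀX - I_p‖_F + ‖Y - X‖_F². -/
open Matrix
open scoped BigOperators

/-- Frobenius norm of a real matrix. -/
noncomputable def frobNorm {n p : ℕ} (A : Matrix (Fin n) (Fin p) ℝ) : ℝ :=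
  Real.sqrt (∑ i, ∑ j, (A i j) ^ 2)

/-- Spectral (ℓ₂ operator) norm of a real matrix. -/
noncomputable def specNorm {n p : ℕ} (A : Matrix (Fin n) (Fin p) ℝ) : ℝ :=
  ‖LinearMap.toContinuousLinearMap (Matrix.toEuclideanLin A)‖

/-- Symmetrization operator Φ(M) = (M + Mᵀ)/2. -/
noncomputable def sym {p : ℕ} (M : Matrix (Fin p) (Fin p) ℝ) : Matrix (Fin p) (Fin p) ℝ :=
  ((1 : ℝ) / 2) • (M + Mᵀ)

/-- Frobenius (trace) inner product ⟨A, B⟩ = tr(AᵀB). -/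
noncomputable def minner {n p : ℕ} (A B : Matrix (Fin n) (Fin p) ℝ) : ℝ :=
  Matrix.trace (Aᵀ * B)

/-- Convex subdifferential of `r` at `X` with respect to the trace inner product. -/
def msubdiff {n p : ℕ} (r : Matrix (Fin n) (Fin p) ℝ → ℝ) (X : Matrix (Fin n) (Fin p) ℝ) :
    Set (Matrix (Fin n) (Fin p) ℝ) :=
  {W | ∀ Z, r X + minner W (Z - X) ≤ r Z}

attribute [local instance] Matrix.frobeniusSeminormedAddCommGroup Matrix.frobeniusNormedSpace

lemma key_expand {n p : ℕ} (A B : Matrix (Fin n) (Fin p) ℝ) :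
    (A + B)ᵀ * (A + B) - 1 = (Aᵀ * A - 1) + (2 : ℝ) • sym (Bᵀ * A) + Bᵀ * B := by
  simp only [sym, transpose_add, transpose_mul, transpose_transpose, smul_smul]
  norm_num
  rw [Matrix.add_mul, Matrix.mul_add, Matrix.mul_add]
  abel

lemma frobNorm_eq_norm {n p : ℕ} (A : Matrix (Fin n) (Fin p) ℝ) : frobNorm A = ‖A‖ := by
  rw [frobNorm, Matrix.frobenius_norm_def, Real.sqrt_eq_rpow]
  congr 1
  simp [Real.norm_eq_abs, Real.rpow_two, sq_abs]

theorem stmt_4 {n p : ℕ} (X Y : Matrix (Fin n) (Fin p) ℝ) (c η : ℝ)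
    (hc : 0 ≤ c) (hη : 0 < η)
    (h : frobNorm (sym ((Y - X)ᵀ * X)) ≤ c * η * frobNorm (Xᵀ * X - 1)) :
    frobNorm (Yᵀ * Y - 1) ≤
      (1 + 2 * c * η) * frobNorm (Xᵀ * X - 1) + frobNorm (Y - X) ^ 2 := by
  simp only [frobNorm_eq_norm] at *
  set E := Y - X with hE
  have key : Yᵀ * Y - 1 = (Xᵀ * X - 1) + (2 : ℝ) • sym (Eᵀ * X) + Eᵀ * E := by
    have hY : Y = X + E := by rw [hE]; abel
    rw [hY]; exact key_expand X E
  rw [key]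
  calc ‖(Xᵀ * X - 1) + (2 : ℝ) • sym (Eᵀ * X) + Eᵀ * E‖
      ≤ ‖(Xᵀ * X - 1) + (2 : ℝ) • sym (Eᵀ * X)‖ + ‖Eᵀ * E‖ := norm_add_le _ _
    _ ≤ ‖Xᵀ * X - 1‖ + ‖(2 : ℝ) • sym (Eᵀ * X)‖ + ‖Eᵀ * E‖ := by
        gcongr; exact norm_add_le _ _
    _ ≤ ‖Xᵀ * X - 1‖ + 2 * (c * η * ‖Xᵀ * X - 1‖) + ‖E‖ * ‖E‖ := by
        gcongr
        · rw [norm_smul]; simp only [Real.norm_ofNat]; gcongr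
        · calc ‖Eᵀ * E‖ ≤ ‖Eᵀ‖ * ‖E‖ := Matrix.frobenius_norm_mul _ _
            _ = ‖E‖ * ‖E‖ := by rw [Matrix.frobenius_norm_transpose]
    _ = (1 + 2 * c * η) * ‖Xᵀ * X - 1‖ + ‖E‖ ^ 2 := by ring
end

section
/- Let X ∈ ℝ^{n×p} satisfy XᵀX = I_p, let f : ℝ^{n×p} → ℝ be differentiable, r : ℝ^{n×p} → ℝ be convex and Lipschitz, and η > 0. Suppose X is the global minimizer of D ↦ ⟨∇f(X), D⟩ + r(D) + (1/(2η))‖D - X‖_F² over the affine set {D : Φ(DᵀX) = Φ(XᵀX)}, where Φ(M) = (M+Mᵀ)/2. Then there exists W ∈ ∂r(X) such that ∇f(X) + W - X·Φ(Xᵀ(∇f(X) + W)) = 0, i.e., X is a first-order stationary point of minimizing f + r over the Stiefel manifold. -/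
open Matrix
open scoped BigOperators

attribute [local instance] Matrix.frobeniusSeminormedAddCommGroup
  Matrix.frobeniusNormedAddCommGroup Matrix.frobeniusNormedSpace

/-!
Write `T = {H | Φ(HᵀX) = 0}`; the constraint set is `X + T`. Comparing `X` with `X + tH`, `H ∈ T`,
and letting `t → 0⁺` gives `-⟨G, H⟩ ≤ r'(X; H)` on `T`. The directional derivative of a convex
function that is finite everywhere is sublinear, so by Hahn–Banach `-⟨G, ·⟩` extends from `T` to a
linear functional `⟨W, ·⟩ ≤ r'(X; ·)`, that is, to a subgradient `W ∈ ∂r(X)` with `G + W ⊥ T`.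
Finally `T⊥ = {XS | S symmetric}`, and `XᵀX = I` forces `S = Φ(Xᵀ(G + W))`.
-/

section DirDeriv

variable {E : Type*} [AddCommGroup E] [Module ℝ E] {r : E → ℝ} {x h k : E}

noncomputable def diffQuot (r : E → ℝ) (x h : E) (t : ℝ) : ℝ :=
  (r (x + t • h) - r x) / t

/-- The one-sided directional derivative `r'(x; h)`: for convex `r` the difference quotients
decrease as `t ↓ 0`, so their infimum is their limit. -/
noncomputable def dirDeriv (r : E → ℝ) (x h : E) : ℝ :=
  ⨅ t : Set.Ioi (0 : ℝ), diffQuot r x h t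

lemma ConvexOn.comp_add_smul (hr : ConvexOn ℝ Set.univ r) (x h : E) :
    ConvexOn ℝ Set.univ fun t : ℝ => r (x + t • h) := by
  simpa [Function.comp_def] using
    (hr.translate_right x).comp_linearMap (LinearMap.toSpanSingleton ℝ E h)

lemma diffQuot_eq_slope (r : E → ℝ) (x h : E) (t : ℝ) :
    diffQuot r x h t = (r (x + t • h) - r (x + (0 : ℝ) • h)) / (t - 0) := by
  rw [diffQuot, zero_smul, add_zero, sub_zero]

lemma ConvexOn.diffQuot_mono (hr : ConvexOn ℝ Set.univ r) {s t : ℝ} (hs : 0 < s) (hst : s ≤ t) :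
    diffQuot r x h s ≤ diffQuot r x h t := by
  rw [diffQuot_eq_slope, diffQuot_eq_slope]
  exact (hr.comp_add_smul x h).secant_mono trivial trivial trivial hs.ne'
    (hs.trans_le hst).ne' hst

lemma ConvexOn.sub_le_diffQuot (hr : ConvexOn ℝ Set.univ r) {t : ℝ} (ht : 0 < t) :
    r x - r (x - h) ≤ diffQuot r x h t := by
  have := (hr.comp_add_smul x h).slope_mono_adjacent trivial trivial (neg_one_lt_zero) ht
  simpa [diffQuot, ← sub_eq_add_neg] using this

lemma ConvexOn.bddBelow_diffQuot (hr : ConvexOn ℝ Set.univ r) :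
    BddBelow (Set.range fun t : Set.Ioi (0 : ℝ) => diffQuot r x h t) :=
  ⟨r x - r (x - h), by rintro _ ⟨t, rfl⟩; exact hr.sub_le_diffQuot t.2⟩

lemma ConvexOn.dirDeriv_le_diffQuot (hr : ConvexOn ℝ Set.univ r) {t : ℝ} (ht : 0 < t) :
    dirDeriv r x h ≤ diffQuot r x h t :=
  ciInf_le hr.bddBelow_diffQuot (⟨t, ht⟩ : Set.Ioi (0 : ℝ))

lemma le_dirDeriv {a : ℝ} (ha : ∀ t : ℝ, 0 < t → a ≤ diffQuot r x h t) : a ≤ dirDeriv r x h :=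
  le_ciInf fun t => ha t t.2

lemma ConvexOn.dirDeriv_sub_le (hr : ConvexOn ℝ Set.univ r) (y : E) :
    dirDeriv r x (y - x) ≤ r y - r x := by
  simpa [diffQuot] using hr.dirDeriv_le_diffQuot (x := x) (h := y - x) one_pos

lemma diffQuot_smul (r : E → ℝ) (x h : E) {c : ℝ} (hc : 0 < c) (t : ℝ) :
    diffQuot r x (c • h) t = c * diffQuot r x h (t * c) := by
  rcases eq_or_ne t 0 with rfl | ht
  · simp [diffQuot]
  · simp only [diffQuot, smul_smul]
    field_simp

lemma ConvexOn.dirDeriv_smul (hr : ConvexOn ℝ Set.univ r) {c : ℝ} (hc : 0 < c) :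
    dirDeriv r x (c • h) = c * dirDeriv r x h := by
  refine le_antisymm ?_ ?_
  · rw [← div_le_iff₀' hc]
    refine le_dirDeriv fun t ht => ?_
    rw [div_le_iff₀' hc]
    calc dirDeriv r x (c • h) ≤ diffQuot r x (c • h) (t / c) :=
          hr.dirDeriv_le_diffQuot (div_pos ht hc)
      _ = c * diffQuot r x h t := by rw [diffQuot_smul r x h hc, div_mul_cancel₀ t hc.ne']
  · refine le_dirDeriv fun t ht => ?_
    rw [diffQuot_smul r x h hc]
    exact mul_le_mul_of_nonneg_left (hr.dirDeriv_le_diffQuot (mul_pos ht hc)) hc.le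

lemma ConvexOn.diffQuot_add_le (hr : ConvexOn ℝ Set.univ r) {t : ℝ} (ht : 0 < t) :
    diffQuot r x (h + k) t ≤ diffQuot r x h (2 * t) + diffQuot r x k (2 * t) := by
  have hmid := hr.2 (Set.mem_univ (x + (2 * t) • h)) (Set.mem_univ (x + (2 * t) • k))
    (by norm_num : (0 : ℝ) ≤ 1 / 2) (by norm_num : (0 : ℝ) ≤ 1 / 2) (by norm_num)
  have hpt : (1 / 2 : ℝ) • (x + (2 * t) • h) + (1 / 2 : ℝ) • (x + (2 * t) • k) =
      x + t • (h + k) := by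
    module
  rw [hpt, smul_eq_mul, smul_eq_mul] at hmid
  rw [diffQuot, diffQuot, diffQuot, ← add_div, div_le_div_iff₀ ht (by positivity)]
  nlinarith

lemma ConvexOn.dirDeriv_add_le (hr : ConvexOn ℝ Set.univ r) :
    dirDeriv r x (h + k) ≤ dirDeriv r x h + dirDeriv r x k := by
  refine le_of_forall_pos_le_add fun ε hε => ?_
  obtain ⟨⟨s, hs⟩, hsε⟩ := exists_lt_of_ciInf_lt (lt_add_of_pos_right (dirDeriv r x h) (half_pos hε))
  obtain ⟨⟨t, ht⟩, htε⟩ := exists_lt_of_ciInf_lt (lt_add_of_pos_right (dirDeriv r x k) (half_pos hε))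
  have hu : 0 < min s t := lt_min hs ht
  calc dirDeriv r x (h + k) ≤ diffQuot r x (h + k) (min s t / 2) :=
        hr.dirDeriv_le_diffQuot (half_pos hu)
    _ ≤ diffQuot r x h (min s t) + diffQuot r x k (min s t) := by
        simpa [mul_div_cancel₀] using hr.diffQuot_add_le (x := x) (h := h) (k := k) (half_pos hu)
    _ ≤ diffQuot r x h s + diffQuot r x k t :=
        add_le_add (hr.diffQuot_mono hu (min_le_left s t)) (hr.diffQuot_mono hu (min_le_right s t))
    _ ≤ dirDeriv r x h + dirDeriv r x k + ε := by linarith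

lemma ConvexOn.neg_le_dirDeriv_of_forall_le (hr : ConvexOn ℝ Set.univ r) {a b : ℝ}
    (hab : ∀ t : ℝ, 0 < t → r x ≤ r (x + t • h) + t * a + t ^ 2 * b) :
    -a ≤ dirDeriv r x h := by
  refine le_dirDeriv fun t ht => ?_
  have hlim : Filter.Tendsto (fun s : ℝ => -a - s * b) (nhdsWithin 0 (Set.Ioi 0)) (nhds (-a)) :=
    ((Continuous.tendsto' (f := fun s : ℝ => -a - s * b) (by fun_prop) 0 (-a) (by simp))).mono_left
      nhdsWithin_le_nhds
  refine le_of_tendsto hlim ?_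
  filter_upwards [Ioc_mem_nhdsGT ht] with s ⟨hs, hst⟩
  calc -a - s * b ≤ diffQuot r x h s := by
        rw [diffQuot, le_div_iff₀ hs]; nlinarith [hab s hs]
    _ ≤ diffQuot r x h t := hr.diffQuot_mono hs hst

lemma ConvexOn.exists_subgradient_eqOn (hr : ConvexOn ℝ Set.univ r) (V : Submodule ℝ E)
    (φ : E →ₗ[ℝ] ℝ) (hφ : ∀ h ∈ V, φ h ≤ dirDeriv r x h) :
    ∃ g : E →ₗ[ℝ] ℝ, (∀ h ∈ V, g h = φ h) ∧ ∀ y, r x + g (y - x) ≤ r y := by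
  obtain ⟨g, hgV, hg⟩ := exists_extension_of_le_sublinear ⟨V, φ.domRestrict V⟩ (dirDeriv r x)
    (fun c hc h => hr.dirDeriv_smul hc) (fun h k => hr.dirDeriv_add_le) (fun h => hφ h h.2)
  refine ⟨g, fun h hh => hgV ⟨h, hh⟩, fun y => ?_⟩
  linarith [hg (y - x), hr.dirDeriv_sub_le (x := x) y]

end DirDeriv

section Stiefel

variable {n p : ℕ}

lemma minner_eq_sum (A B : Matrix (Fin n) (Fin p) ℝ) :
    minner A B = ∑ i, ∑ j, A i j * B i j := by
  rw [Finset.sum_comm]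
  simp [minner, Matrix.trace, Matrix.mul_apply]

lemma minner_zero_left (B : Matrix (Fin n) (Fin p) ℝ) : minner 0 B = 0 := by
  simp [minner]

lemma minner_add_left (A B C : Matrix (Fin n) (Fin p) ℝ) :
    minner (A + B) C = minner A C + minner B C := by
  simp [minner, Matrix.add_mul, Matrix.trace_add]

lemma minner_add_right (A B C : Matrix (Fin n) (Fin p) ℝ) :
    minner A (B + C) = minner A B + minner A C := by
  simp [minner, Matrix.mul_add, Matrix.trace_add]

lemma minner_sub_left (A B C : Matrix (Fin n) (Fin p) ℝ) :
    minner (A - B) C = minner A C - minner B C := by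
  simp [minner, Matrix.sub_mul, Matrix.trace_sub]

lemma minner_smul_left (c : ℝ) (A B : Matrix (Fin n) (Fin p) ℝ) :
    minner (c • A) B = c * minner A B := by
  simp [minner, Matrix.trace_smul]

lemma minner_smul_right (c : ℝ) (A B : Matrix (Fin n) (Fin p) ℝ) :
    minner A (c • B) = c * minner A B := by
  simp [minner, Matrix.trace_smul]

lemma eq_zero_of_minner_self_eq_zero {A : Matrix (Fin n) (Fin p) ℝ} (h : minner A A = 0) :
    A = 0 := by
  ext i j
  rw [minner_eq_sum, Finset.sum_eq_zero_iff_of_nonneg fun i _ =>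
    Finset.sum_nonneg fun j _ => mul_self_nonneg (A i j)] at h
  have := h i (Finset.mem_univ i)
  rw [Finset.sum_eq_zero_iff_of_nonneg fun j _ => mul_self_nonneg (A i j)] at this
  exact mul_self_eq_zero.1 (this j (Finset.mem_univ j))

lemma frobNorm_sq (A : Matrix (Fin n) (Fin p) ℝ) : frobNorm A ^ 2 = minner A A := by
  rw [frobNorm, Real.sq_sqrt (by positivity), minner_eq_sum]
  simp only [sq]

@[simps]
noncomputable def minnerLinear (A : Matrix (Fin n) (Fin p) ℝ) :
    Matrix (Fin n) (Fin p) ℝ →ₗ[ℝ] ℝ where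
  toFun := minner A
  map_add' := minner_add_right A
  map_smul' c B := minner_smul_right c A B

lemma exists_minner_eq (g : Matrix (Fin n) (Fin p) ℝ →ₗ[ℝ] ℝ) :
    ∃ W, ∀ H, minner W H = g H := by
  refine ⟨Matrix.of fun i j => g (Matrix.single i j 1), fun H => ?_⟩
  conv_rhs => rw [matrix_eq_sum_single H]
  simp only [minner_eq_sum, map_sum, Matrix.of_apply]
  refine Finset.sum_congr rfl fun i _ => Finset.sum_congr rfl fun j _ => ?_
  rw [mul_comm, ← smul_eq_mul, ← map_smul, Matrix.smul_single, smul_eq_mul, mul_one]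

lemma sym_add {q : ℕ} (M N : Matrix (Fin q) (Fin q) ℝ) : sym (M + N) = sym M + sym N := by
  rw [sym, sym, sym, ← smul_add, transpose_add, add_add_add_comm]

lemma sym_smul {q : ℕ} (c : ℝ) (M : Matrix (Fin q) (Fin q) ℝ) : sym (c • M) = c • sym M := by
  rw [sym, sym, transpose_smul, ← smul_add, smul_comm]

lemma sym_transpose {q : ℕ} (M : Matrix (Fin q) (Fin q) ℝ) : sym Mᵀ = sym M := by
  rw [sym, sym, transpose_transpose, add_comm]

lemma transpose_sym {q : ℕ} (M : Matrix (Fin q) (Fin q) ℝ) : (sym M)ᵀ = sym M := by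
  rw [sym, transpose_smul, transpose_add, transpose_transpose, add_comm]

lemma sym_sym {q : ℕ} (M : Matrix (Fin q) (Fin q) ℝ) : sym (sym M) = sym M := by
  rw [sym, transpose_sym, ← two_smul ℝ (sym M), smul_smul]
  norm_num

lemma trace_sym_mul {q : ℕ} (M K : Matrix (Fin q) (Fin q) ℝ) :
    trace (sym M * K) = trace (sym M * sym K) := by
  have hKt : trace (sym M * Kᵀ) = trace (sym M * K) := by
    rw [← trace_transpose, transpose_mul, transpose_transpose, transpose_sym, trace_mul_comm]
  rw [show sym K = (1 / 2 : ℝ) • (K + Kᵀ) from rfl, Matrix.mul_smul, Matrix.mul_add, trace_smul, trace_add, hKt, smul_eq_mul]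
  ring

/-- The tangent space of the Stiefel manifold at `X`, and the direction space of the affine
constraint `Φ(DᵀX) = Φ(XᵀX)`. -/
def tangentSpace (X : Matrix (Fin n) (Fin p) ℝ) : Submodule ℝ (Matrix (Fin n) (Fin p) ℝ) where
  carrier := {H | sym (Hᵀ * X) = 0}
  add_mem' {A B} hA hB := by
    simp only [Set.mem_ofPred_eq, transpose_add, Matrix.add_mul, sym_add] at *
    rw [hA, hB, add_zero]
  zero_mem' := by simp [sym]
  smul_mem' c A hA := by
    simp only [Set.mem_ofPred_eq, transpose_smul, Matrix.smul_mul, sym_smul] at *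
    rw [hA, smul_zero]

lemma mem_tangentSpace {X H : Matrix (Fin n) (Fin p) ℝ} :
    H ∈ tangentSpace X ↔ sym (Hᵀ * X) = 0 :=
  Iff.rfl

lemma sym_add_transpose_mul_eq {X H : Matrix (Fin n) (Fin p) ℝ} (hH : H ∈ tangentSpace X) :
    sym ((X + H)ᵀ * X) = sym (Xᵀ * X) := by
  rw [transpose_add, Matrix.add_mul, sym_add, mem_tangentSpace.1 hH, add_zero]

lemma minner_mul_sym_eq_zero {X H : Matrix (Fin n) (Fin p) ℝ} (hH : H ∈ tangentSpace X)
    (M : Matrix (Fin p) (Fin p) ℝ) : minner (X * sym M) H = 0 := by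
  have hXH : sym (Xᵀ * H) = 0 := by
    rw [← sym_transpose, transpose_mul, transpose_transpose, mem_tangentSpace.1 hH]
  rw [minner, transpose_mul, transpose_sym, Matrix.mul_assoc, trace_sym_mul, hXH, Matrix.mul_zero,
    trace_zero]

lemma sub_mul_sym_mem_tangentSpace {X : Matrix (Fin n) (Fin p) ℝ} (hX : Xᵀ * X = 1)
    (A : Matrix (Fin n) (Fin p) ℝ) : A - X * sym (Xᵀ * A) ∈ tangentSpace X := by
  have hA : sym (Aᵀ * X) = sym (Xᵀ * A) := by
    rw [← sym_transpose, transpose_mul, transpose_transpose]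
  rw [mem_tangentSpace, transpose_sub, Matrix.sub_mul, transpose_mul, Matrix.mul_assoc, hX,
    Matrix.mul_one, transpose_sym, sub_eq_add_neg, sym_add, ← neg_one_smul ℝ, sym_smul, sym_sym,
    hA, neg_one_smul, add_neg_cancel]

/-- The normal space of the Stiefel manifold at `X` is `{X S | S symmetric}`. -/
lemma eq_mul_sym_of_forall_minner_eq_zero {X A : Matrix (Fin n) (Fin p) ℝ} (hX : Xᵀ * X = 1)
    (hA : ∀ H ∈ tangentSpace X, minner A H = 0) : A = X * sym (Xᵀ * A) := by
  have hR := sub_mul_sym_mem_tangentSpace hX A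
  refine sub_eq_zero.1 (eq_zero_of_minner_self_eq_zero ?_)
  rw [minner_sub_left, hA _ hR, minner_mul_sym_eq_zero hR, sub_zero]

end Stiefel

theorem stmt_17_general {n p : ℕ} (X : Matrix (Fin n) (Fin p) ℝ) (hXfeas : Xᵀ * X = 1)
    (r : Matrix (Fin n) (Fin p) ℝ → ℝ)
    (G : Matrix (Fin n) (Fin p) ℝ)
    (hrconv : ConvexOn ℝ Set.univ r)
    (η : ℝ)
    (hmin : ∀ D : Matrix (Fin n) (Fin p) ℝ, sym (Dᵀ * X) = sym (Xᵀ * X) →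
      minner G X + r X + (1 / (2 * η)) * frobNorm (X - X) ^ 2 ≤
        minner G D + r D + (1 / (2 * η)) * frobNorm (D - X) ^ 2) :
    ∃ W ∈ msubdiff r X, G + W - X * sym (Xᵀ * (G + W)) = 0 := by
  have hdir : ∀ H ∈ tangentSpace X, -minnerLinear G H ≤ dirDeriv r X H := by
    intro H hH
    refine hrconv.neg_le_dirDeriv_of_forall_le (b := minner H H / (2 * η)) fun t _ => ?_
    have hcmp := hmin (X + t • H) (sym_add_transpose_mul_eq ((tangentSpace X).smul_mem t hH))
    simp only [frobNorm_sq, sub_self, minner_zero_left, add_sub_cancel_left, minner_add_right,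
      minner_smul_left, minner_smul_right] at hcmp
    rw [minnerLinear_apply]
    linarith [show 1 / (2 * η) * (t * (t * minner H H)) = t ^ 2 * (minner H H / (2 * η)) by ring]
  obtain ⟨g, hgT, hg⟩ := hrconv.exists_subgradient_eqOn (tangentSpace X) (-minnerLinear G) hdir
  obtain ⟨W, hW⟩ := exists_minner_eq g
  refine ⟨W, fun Z => hW (Z - X) ▸ hg Z, sub_eq_zero.2 ?_⟩
  refine eq_mul_sym_of_forall_minner_eq_zero hXfeas fun H hH => ?_
  rw [minner_add_left, hW, hgT H hH, LinearMap.neg_apply, minnerLinear_apply, add_neg_cancel]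

theorem stmt_17 {n p : ℕ} (X : Matrix (Fin n) (Fin p) ℝ) (hXfeas : Xᵀ * X = 1)
    (f r : Matrix (Fin n) (Fin p) ℝ → ℝ)
    (hf : Differentiable ℝ f)
    (G : Matrix (Fin n) (Fin p) ℝ)
    (hG : ∀ H : Matrix (Fin n) (Fin p) ℝ, fderiv ℝ f X H = minner G H)
    (hrconv : ConvexOn ℝ Set.univ r)
    (hrlip : ∃ L : NNReal, LipschitzWith L r)
    (η : ℝ) (hη : 0 < η)
    (hmin : ∀ D : Matrix (Fin n) (Fin p) ℝ, sym (Dᵀ * X) = sym (Xᵀ * X) →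
      minner G X + r X + (1 / (2 * η)) * frobNorm (X - X) ^ 2 ≤
        minner G D + r D + (1 / (2 * η)) * frobNorm (D - X) ^ 2) :
    ∃ W ∈ msubdiff r X, G + W - X * sym (Xᵀ * (G + W)) = 0 :=
  stmt_17_general X hXfeas r G hrconv η hmin
end
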